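/- The T/I group acting on the set of 24 major and minor triads acts simply transitively: for any two triads X, Y there is exactly one element of the T/I group mapping X to Y. The same holds for the PLR group, and the two groups are each other's centralizers in the symmetric group on the 24 triads. -/

import Mathlib

/-- A triad is given by its root and its quality: `(r, false)` is the major
triad {r, r+4, r+7}, `(r, true)` is the minor triad {r, r+3, r+7}.
There are 24 such triads. -/
abbrev Triad : Type := ZMod 12 × Bool

/-- Transposition Tₙ acting on triads (pointwise x ↦ x + n on pitch classes). -/
def Tperm (n : ZMod 12) : Equiv.Perm Triad :=
  (Equiv.addRight n).prodCongr (Equiv.refl Bool)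

/-- Inversion Iₙ (pointwise x ↦ -x + n): sends the major triad on r to the
minor triad on n + 5 - r, and conversely. -/
def Iperm (n : ZMod 12) : Equiv.Perm Triad :=
  Function.Involutive.toPerm (fun p => (n + 5 - p.1, !p.2))
    (by intro p; cases p; simp [Bool.not_not])

/-- Parallel: exchanges the major and minor triads on the same root. -/
def Pperm : Equiv.Perm Triad :=
  Function.Involutive.toPerm (fun p => (p.1, !p.2))
    (by intro p; simp)

/-- Leittonwechsel: major on r ↦ minor on r + 4 (e.g. C major ↦ e minor). -/
def Lperm : Equiv.Perm Triad :=
  Function.Involutive.toPerm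
    (fun p => (if p.2 then p.1 - 4 else p.1 + 4, !p.2))
    (by intro p; obtain ⟨r, q⟩ := p; cases q <;> simp)

/-- Relative: major on r ↦ minor on r + 9 (e.g. C major ↦ a minor). -/
def Rperm : Equiv.Perm Triad :=
  Function.Involutive.toPerm
    (fun p => (if p.2 then p.1 + 3 else p.1 + 9, !p.2))
    (by
      have h : (12 : ZMod 12) = 0 := by decide
      intro p; obtain ⟨r, q⟩ := p; cases q <;> simp <;> linear_combination h)

/-- The T/I group as a subgroup of the symmetric group on the 24 triads. -/
def TIgroup : Subgroup (Equiv.Perm Triad) :=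
  Subgroup.closure ((Set.range Tperm) ∪ (Set.range Iperm))

/-- The PLR group. -/
def PLRgroup : Subgroup (Equiv.Perm Triad) :=
  Subgroup.closure {Pperm, Lperm, Rperm}

/-!
If two transitive groups of permutations commute elementwise, a permutation commuting with one of
them is determined by its value at a single point; hence each group acts freely and is the full
centralizer of the other. Both groups here act transitively on the triads, and every `P`, `L`, `R`
commutes with every `Tₙ` and `Iₙ`: these are finite checks.
-/

open Equiv MulAction

namespace Subgroup

variable {α : Type*} {G H : Subgroup (Perm α)}

theorem eq_of_mem_centralizer_of_apply_eq [IsPretransitive G α] {c d : Perm α}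
    (hc : c ∈ centralizer (G : Set (Perm α))) (hd : d ∈ centralizer (G : Set (Perm α))) {x : α}
    (h : c x = d x) : c = d := by
  ext y
  obtain ⟨g, rfl⟩ := MulAction.exists_smul_eq G x y
  have hgc : (g : Perm α) * c = c * g := mem_centralizer_iff.mp hc g g.2
  have hgd : (g : Perm α) * d = d * g := mem_centralizer_iff.mp hd g g.2
  calc c (g • x) = (g * c : Perm α) x := by rw [hgc]; rfl
    _ = (g * d : Perm α) x := by rw [Perm.mul_apply, Perm.mul_apply, h]
    _ = d (g • x) := by rw [hgd]; rfl

theorem centralizer_eq_of_isPretransitive [IsPretransitive G α] [IsPretransitive H α]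
    (hHG : H ≤ centralizer (G : Set (Perm α))) : centralizer (G : Set (Perm α)) = H := by
  refine le_antisymm (fun c hc => ?_) hHG
  rcases isEmpty_or_nonempty α with hα | ⟨⟨x⟩⟩
  · exact Subsingleton.elim (1 : Perm α) c ▸ H.one_mem
  obtain ⟨h, hh⟩ := MulAction.exists_smul_eq H x (c x)
  rw [eq_of_mem_centralizer_of_apply_eq hc (hHG h.2) hh.symm]
  exact h.2

theorem existsUnique_apply_eq_of_le_centralizer [IsPretransitive G α] [IsPretransitive H α]
    (hGH : G ≤ centralizer (H : Set (Perm α))) (x y : α) :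
    ∃! g : G, (g : Perm α) x = y := by
  obtain ⟨g, hg⟩ := MulAction.exists_smul_eq G x y
  refine ⟨g, hg, fun g' hg' => Subtype.ext ?_⟩
  exact eq_of_mem_centralizer_of_apply_eq (hGH g'.2) (hGH g.2) (hg'.trans hg.symm)

end Subgroup

lemma Tperm_mem_TIgroup (n : ZMod 12) : Tperm n ∈ TIgroup :=
  Subgroup.subset_closure (Or.inl ⟨n, rfl⟩)

lemma Iperm_mem_TIgroup (n : ZMod 12) : Iperm n ∈ TIgroup :=
  Subgroup.subset_closure (Or.inr ⟨n, rfl⟩)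

lemma exists_Tperm_or_Iperm_apply_eq :
    ∀ y : Triad, ∃ n : ZMod 12, Tperm n (0, false) = y ∨ Iperm n (0, false) = y := by
  decide

instance : IsPretransitive TIgroup Triad := by
  refine (isPretransitive_iff_base ((0, false) : Triad)).mpr fun y => ?_
  obtain ⟨n, hn | hn⟩ := exists_Tperm_or_Iperm_apply_eq y
  exacts [⟨⟨_, Tperm_mem_TIgroup n⟩, hn⟩, ⟨⟨_, Iperm_mem_TIgroup n⟩, hn⟩]

/-- `L * R` transposes major triads up by five semitones (C major ↦ a minor ↦ F major), and `5`
generates `ZMod 12`. -/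
lemma exists_LR_pow_apply_eq : ∀ y : Triad, ∃ k : Fin 12,
    ((Lperm * Rperm) ^ (k : ℕ)) (0, false) = y ∨
      (Pperm * (Lperm * Rperm) ^ (k : ℕ)) (0, false) = y := by
  decide

instance : IsPretransitive PLRgroup Triad := by
  refine (isPretransitive_iff_base ((0, false) : Triad)).mpr fun y => ?_
  have hP : Pperm ∈ PLRgroup := Subgroup.subset_closure (by simp)
  have hLR : Lperm * Rperm ∈ PLRgroup :=
    mul_mem (Subgroup.subset_closure (by simp)) (Subgroup.subset_closure (by simp))
  obtain ⟨k, hk | hk⟩ := exists_LR_pow_apply_eq y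
  exacts [⟨⟨_, pow_mem hLR k⟩, hk⟩, ⟨⟨_, mul_mem hP (pow_mem hLR k)⟩, hk⟩]

lemma PLRgroup_le_centralizer_TIgroup :
    PLRgroup ≤ Subgroup.centralizer (TIgroup : Set (Perm Triad)) := by
  have hgens : ∀ p ∈ ({Pperm, Lperm, Rperm} : Set (Perm Triad)), ∀ n : ZMod 12,
      Tperm n * p = p * Tperm n ∧ Iperm n * p = p * Iperm n := by
    rintro p (rfl | rfl | rfl) <;> decide
  rw [PLRgroup, Subgroup.closure_le, TIgroup, Subgroup.centralizer_closure]
  intro p hp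
  rw [SetLike.mem_coe, Subgroup.mem_centralizer_iff]
  rintro _ (⟨n, rfl⟩ | ⟨n, rfl⟩)
  exacts [(hgens p hp n).1, (hgens p hp n).2]

/-- The T/I and PLR groups each act simply transitively on the 24 triads, and
they are each other's centralizers in the symmetric group on the triads. -/
theorem TI_PLR_duality :
    (∀ X Y : Triad, ∃! g : TIgroup, (g : Equiv.Perm Triad) X = Y) ∧
    (∀ X Y : Triad, ∃! g : PLRgroup, (g : Equiv.Perm Triad) X = Y) ∧
    Subgroup.centralizer (TIgroup : Set (Equiv.Perm Triad)) = PLRgroup ∧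
    Subgroup.centralizer (PLRgroup : Set (Equiv.Perm Triad)) = TIgroup := by
  have hPLR := PLRgroup_le_centralizer_TIgroup
  have hTI := Subgroup.le_centralizer_iff.mp hPLR
  exact ⟨Subgroup.existsUnique_apply_eq_of_le_centralizer hTI,
    Subgroup.existsUnique_apply_eq_of_le_centralizer hPLR,
    Subgroup.centralizer_eq_of_isPretransitive hPLR,
    Subgroup.centralizer_eq_of_isPretransitive hTI⟩
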